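/- arXiv:2411.05235 — 7 statements merged into one kernel-verified Lean document; each statement's English description precedes it below -/
import Mathlib

section
/- Invariance of the deterministic model: Let R : ℝ → ℝ be differentiable on [0,∞) and satisfy R'(t) = βR(t)(N − R(t))/(1 + εR(t)) − (γ+μ)R(t) for all t ≥ 0. If R(0) ∈ (0, N), then R(t) ∈ (0, N) for all t ≥ 0. -/
/-!
Both walls of `(0, N)` are fences in the sense of `image_le_of_deriv_right_lt_deriv_boundary`.
At `R = N` the vector field equals `-(γ + μ) N < 0`, so `R` can never exceed `N`, and it cannot
even touch `N`, since it would have a local maximum there with nonzero derivative. Below `N` the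
vector field is at least `-(γ + μ) R`, so `R` decays more slowly than the strict lower fence
`R 0 * exp (-2 (γ + μ) t)`, which stays positive.
-/

open Set Filter Topology Real

section Fencing

variable {f f' B B' : ℝ → ℝ} {a : ℝ}

theorem image_le_of_deriv_lt_deriv_boundary_Ici (hf : ∀ t ≥ a, HasDerivAt f (f' t) t)
    (hB : ∀ t, HasDerivAt B (B' t) t) (ha : f a ≤ B a)
    (bound : ∀ t ≥ a, f t = B t → f' t < B' t) : ∀ t ≥ a, f t ≤ B t := fun _ ht =>
  image_le_of_deriv_right_lt_deriv_boundary
    (fun x hx => (hf x hx.1).continuousAt.continuousWithinAt)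
    (fun x hx => (hf x hx.1).hasDerivWithinAt) ha hB (fun x hx => bound x hx.1) ⟨ht, le_rfl⟩

theorem image_ge_of_deriv_lt_deriv_boundary_Ici (hf : ∀ t ≥ a, HasDerivAt f (f' t) t)
    (hB : ∀ t, HasDerivAt B (B' t) t) (ha : B a ≤ f a)
    (bound : ∀ t ≥ a, f t = B t → B' t < f' t) : ∀ t ≥ a, B t ≤ f t := by
  intro t ht
  have := image_le_of_deriv_lt_deriv_boundary_Ici (f := -f) (B := -B)
    (fun t ht => (hf t ht).neg) (fun t => (hB t).neg) (neg_le_neg ha)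
    (fun t ht heq => neg_lt_neg (bound t ht (neg_inj.mp heq))) t ht
  simpa using this

end Fencing

theorem lt_of_eventually_le_of_hasDerivAt_ne_zero {f : ℝ → ℝ} {f' t M : ℝ}
    (hf : HasDerivAt f f' t) (hf' : f t = M → f' ≠ 0) (hle : ∀ᶠ s in 𝓝 t, f s ≤ M) :
    f t < M := by
  refine lt_of_le_of_ne hle.self_of_nhds fun hM => hf' hM ?_
  exact IsLocalMax.hasDerivAt_eq_zero (by rwa [← hM] at hle) hf

theorem image_lt_of_hasDerivAt_comp_of_neg {f F : ℝ → ℝ} {a M : ℝ}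
    (hf : ∀ t ≥ a, HasDerivAt f (F (f t)) t) (hM : F M < 0) (ha : f a < M) :
    ∀ t ≥ a, f t < M := by
  have hle : ∀ t ≥ a, f t ≤ M :=
    image_le_of_deriv_lt_deriv_boundary_Ici hf (fun t => hasDerivAt_const t M) ha.le
      fun t _ hft => hft ▸ hM
  intro t ht
  rcases ht.eq_or_lt with rfl | ht
  · exact ha
  refine lt_of_eventually_le_of_hasDerivAt_ne_zero (hf t ht.le) (fun hft => hft ▸ hM.ne) ?_
  filter_upwards [Ici_mem_nhds ht] with s hs using hle s hs

/-- The vector field `b` of the deterministic model. -/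
noncomputable def drift (β γ μ N ε x : ℝ) : ℝ := β * x * (N - x) / (1 + ε * x) - (γ + μ) * x

section Drift

variable {β γ μ N ε : ℝ}

theorem drift_self : drift β γ μ N ε N = -(γ + μ) * N := by
  rw [drift]
  ring

theorem neg_mul_le_drift (hβ : 0 ≤ β) (hε : 0 ≤ ε) {x : ℝ} (hx₀ : 0 ≤ x) (hxN : x ≤ N) :
    -(γ + μ) * x ≤ drift β γ μ N ε x := by
  have : 0 ≤ β * x * (N - x) / (1 + ε * x) := by
    have : 0 ≤ N - x := sub_nonneg.mpr hxN
    positivity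
  rw [drift]
  linarith

theorem drift_self_neg (hγμ : 0 < γ + μ) (hN : 0 < N) : drift β γ μ N ε N < 0 := by
  rw [drift_self]
  nlinarith

theorem drift_solution_pos (hβ : 0 ≤ β) (hε : 0 ≤ ε) (hγμ : 0 < γ + μ) {R : ℝ → ℝ}
    (hode : ∀ t ≥ 0, HasDerivAt R (drift β γ μ N ε (R t)) t) (hle : ∀ t ≥ 0, R t ≤ N)
    (h0 : 0 < R 0) : ∀ t ≥ 0, 0 < R t := by
  set k := 2 * (γ + μ)
  have hfence : ∀ t, HasDerivAt (fun t => R 0 * exp (-k * t)) (-k * (R 0 * exp (-k * t))) t :=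
    fun t => (((hasDerivAt_id' t).const_mul (-k)).exp.const_mul (R 0)).congr_deriv (by ring)
  have hlow : ∀ t ≥ 0, R 0 * exp (-k * t) ≤ R t := by
    refine image_ge_of_deriv_lt_deriv_boundary_Ici hode hfence (by simp) ?_
    intro t ht hRt
    have hpos : 0 < R t := hRt ▸ mul_pos h0 (exp_pos _)
    have := neg_mul_le_drift (γ := γ) (μ := μ) hβ hε hpos.le (hle t ht)
    rw [← hRt]
    nlinarith
  exact fun t ht => (mul_pos h0 (exp_pos _)).trans_le (hlow t ht)

end Drift

/-- Invariance of the deterministic model: if `R` solves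
`R' = β R (N - R)/(1 + ε R) - (γ + μ) R` on `[0, ∞)` and `R 0 ∈ (0, N)`,
then `R t ∈ (0, N)` for all `t ≥ 0`. -/
theorem deterministic_invariance
    (β γ μ N ε : ℝ) (hβ : 0 < β) (hγ : 0 < γ) (hμ : 0 < μ) (hN : 0 < N) (hε : 0 < ε)
    (R : ℝ → ℝ)
    (hode : ∀ t ≥ (0:ℝ),
      HasDerivAt R (β * R t * (N - R t) / (1 + ε * R t) - (γ + μ) * R t) t)
    (h0 : R 0 ∈ Set.Ioo (0:ℝ) N) :
    ∀ t ≥ (0:ℝ), R t ∈ Set.Ioo (0:ℝ) N := by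
  change ∀ t ≥ (0:ℝ), HasDerivAt R (drift β γ μ N ε (R t)) t at hode
  have hγμ : 0 < γ + μ := add_pos hγ hμ
  have hlt : ∀ t ≥ 0, R t < N :=
    image_lt_of_hasDerivAt_comp_of_neg hode (drift_self_neg hγμ hN) h0.2
  have hpos : ∀ t ≥ 0, 0 < R t :=
    drift_solution_pos hβ.le hε.le hγμ hode (fun t ht => (hlt t ht).le) h0.1
  exact fun t ht => ⟨hpos t ht, hlt t ht⟩
end

section
/- Asymptotic stability of the trivial equilibrium: Assume βN < γ + μ. Then R = 0 is an asymptotically stable equilibrium of the deterministic model, in the following sense: (i) for every ε' > 0 there exists δ > 0 such that every differentiable R : ℝ → ℝ satisfying R'(t) = βR(t)(N − R(t))/(1 + εR(t)) − (γ+μ)R(t) for t ≥ 0 with R(0) ∈ (0, δ) and R(t) ∈ (0, N) for all t ≥ 0 satisfies R(t) < ε' for all t ≥ 0; and (ii) there exists δ > 0 such that every such solution with R(0) ∈ (0, δ) satisfies R(t) → 0 as t → ∞. -/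
/-!
For `0 < R < N` the saturated infection term `β R (N - R) / (1 + ε R)` is at most `β N R`,
so along any solution staying in `(0, N)` we have `R' ≤ -(γ + μ - β N) R`. Grönwall's
inequality then gives `R t ≤ R 0 * exp (-(γ + μ - β N) t)`, an exponentially decaying bound
when `β N < γ + μ`.
-/

open Real Filter Set

theorem le_mul_exp_of_hasDerivAt_le {f f' : ℝ → ℝ} {K : ℝ}
    (hf : ∀ t ≥ (0:ℝ), HasDerivAt f (f' t) t) (hf' : ∀ t ≥ (0:ℝ), f' t ≤ K * f t) :
    ∀ t ≥ (0:ℝ), f t ≤ f 0 * exp (K * t) := by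
  intro t ht
  have hbound := le_gronwallBound_of_liminf_deriv_right_le (δ := f 0) (ε := 0) (a := 0) (b := t)
    (fun x hx => (hf x hx.1).continuousAt.continuousWithinAt)
    (fun x hx _ hr => (hf x hx.1).hasDerivWithinAt.liminf_right_slope_le hr)
    le_rfl (fun x hx => by simpa using hf' x hx.1) t ⟨ht, le_rfl⟩
  rwa [sub_zero, gronwallBound_ε0] at hbound

theorem saturated_rate_le_linear {β γ μ N ε x : ℝ} (hβ : 0 ≤ β) (hε : 0 ≤ ε)
    (hx : x ∈ Ioo 0 N) :
    β * x * (N - x) / (1 + ε * x) - (γ + μ) * x ≤ -(γ + μ - β * N) * x := by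
  obtain ⟨hx0, hxN⟩ := hx
  have hnum : 0 ≤ β * x * (N - x) := by have := mul_nonneg hβ hx0.le; nlinarith
  have hden : 1 ≤ 1 + ε * x := by nlinarith
  calc β * x * (N - x) / (1 + ε * x) - (γ + μ) * x
      ≤ β * x * (N - x) - (γ + μ) * x := by gcongr; exact div_le_self hnum hden
    _ ≤ -(γ + μ - β * N) * x := by nlinarith [mul_nonneg hβ hx0.le]

theorem le_mul_exp_of_saturated_model {β γ μ N ε : ℝ} (hβ : 0 ≤ β) (hε : 0 ≤ ε)
    {R : ℝ → ℝ}
    (hR : ∀ t ≥ (0:ℝ),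
      HasDerivAt R (β * R t * (N - R t) / (1 + ε * R t) - (γ + μ) * R t) t)
    (hrange : ∀ t ≥ (0:ℝ), R t ∈ Ioo 0 N) :
    ∀ t ≥ (0:ℝ), R t ≤ R 0 * exp (-(γ + μ - β * N) * t) :=
  le_mul_exp_of_hasDerivAt_le hR fun t ht => saturated_rate_le_linear hβ hε (hrange t ht)

theorem deterministic_asymptotic_stability_zero_general
    (β γ μ N ε : ℝ) (hβ : 0 < β) (hε : 0 < ε)
    (hK : β * N < γ + μ) :
    (∀ ε' > (0:ℝ), ∃ δ > (0:ℝ), ∀ R : ℝ → ℝ,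
      (∀ t ≥ (0:ℝ),
        HasDerivAt R (β * R t * (N - R t) / (1 + ε * R t) - (γ + μ) * R t) t) →
      R 0 ∈ Set.Ioo (0:ℝ) δ →
      (∀ t ≥ (0:ℝ), R t ∈ Set.Ioo (0:ℝ) N) →
      ∀ t ≥ (0:ℝ), R t < ε') ∧
    (∃ δ > (0:ℝ), ∀ R : ℝ → ℝ,
      (∀ t ≥ (0:ℝ),
        HasDerivAt R (β * R t * (N - R t) / (1 + ε * R t) - (γ + μ) * R t) t) →
      R 0 ∈ Set.Ioo (0:ℝ) δ →
      (∀ t ≥ (0:ℝ), R t ∈ Set.Ioo (0:ℝ) N) →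
      Filter.Tendsto R Filter.atTop (nhds 0)) := by
  have hc : -(γ + μ - β * N) < 0 := by linarith
  constructor
  · refine fun ε' hε' => ⟨ε', hε', fun R hR h0 hrange t ht => ?_⟩
    have hdecay : exp (-(γ + μ - β * N) * t) ≤ 1 :=
      exp_le_one_iff.mpr (mul_nonpos_of_nonpos_of_nonneg hc.le ht)
    calc R t ≤ R 0 * exp (-(γ + μ - β * N) * t) :=
          le_mul_exp_of_saturated_model hβ.le hε.le hR hrange t ht
      _ ≤ R 0 := mul_le_of_le_one_right h0.1.le hdecay
      _ < ε' := h0.2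
  · refine ⟨1, one_pos, fun R hR _ hrange => ?_⟩
    have hexp : Tendsto (fun t => R 0 * exp (-(γ + μ - β * N) * t)) atTop (nhds 0) := by
      simpa using
        (tendsto_exp_atBot.comp (tendsto_id.const_mul_atTop_of_neg hc)).const_mul (R 0)
    refine tendsto_of_tendsto_of_tendsto_of_le_of_le' tendsto_const_nhds hexp ?_ ?_ <;>
      filter_upwards [eventually_ge_atTop 0] with t ht
    · exact (hrange t ht).1.le
    · exact le_mul_exp_of_saturated_model hβ.le hε.le hR hrange t ht

/-- Asymptotic stability of the trivial equilibrium `R = 0` of the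
deterministic model `R' = β R (N - R)/(1 + ε R) - (γ + μ) R` when `β N < γ + μ`. -/
theorem deterministic_asymptotic_stability_zero
    (β γ μ N ε : ℝ) (hβ : 0 < β) (hγ : 0 < γ) (hμ : 0 < μ) (hN : 0 < N) (hε : 0 < ε)
    (hK : β * N < γ + μ) :
    (∀ ε' > (0:ℝ), ∃ δ > (0:ℝ), ∀ R : ℝ → ℝ,
      (∀ t ≥ (0:ℝ),
        HasDerivAt R (β * R t * (N - R t) / (1 + ε * R t) - (γ + μ) * R t) t) →
      R 0 ∈ Set.Ioo (0:ℝ) δ →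
      (∀ t ≥ (0:ℝ), R t ∈ Set.Ioo (0:ℝ) N) →
      ∀ t ≥ (0:ℝ), R t < ε') ∧
    (∃ δ > (0:ℝ), ∀ R : ℝ → ℝ,
      (∀ t ≥ (0:ℝ),
        HasDerivAt R (β * R t * (N - R t) / (1 + ε * R t) - (γ + μ) * R t) t) →
      R 0 ∈ Set.Ioo (0:ℝ) δ →
      (∀ t ≥ (0:ℝ), R t ∈ Set.Ioo (0:ℝ) N) →
      Filter.Tendsto R Filter.atTop (nhds 0)) :=
  deterministic_asymptotic_stability_zero_general β γ μ N ε hβ hε hK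
end

section
/- Asymptotic stability of the nontrivial equilibrium: Assume βN > γ + μ and set ξ = (βN − γ − μ)/(β + ε(γ+μ)). Then ξ is an asymptotically stable equilibrium of the deterministic model, in the following sense: (i) for every ε' > 0 there exists δ > 0 such that every differentiable R : ℝ → ℝ satisfying R'(t) = βR(t)(N − R(t))/(1 + εR(t)) − (γ+μ)R(t) for t ≥ 0 with |R(0) − ξ| < δ and R(t) ∈ (0, N) for all t ≥ 0 satisfies |R(t) − ξ| < ε' for all t ≥ 0; and (ii) there exists δ > 0 such that every such solution with |R(0) − ξ| < δ satisfies R(t) → ξ as t → ∞. -/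
/-!
With `A = β + ε (γ + μ)` the vector field factors as `b(R) = -(A R / (1 + ε R)) (R - ξ)`, so a
positive solution is pulled towards `ξ` at the positive rate `A R / (1 + ε R)`.
Hence `(R - ξ)²` is a Lyapunov function, which gives stability. Near `ξ` the solution stays above
`ξ / 2`, where the rate is bounded below by a positive constant, and a Grönwall-type argument
gives exponential convergence to `ξ`.
-/

open Real Set Filter Topology

theorem le_exp_neg_mul_of_hasDerivAt_le_neg_mul {f f' : ℝ → ℝ} {c : ℝ}
    (hf : ∀ t ≥ 0, HasDerivAt f (f' t) t) (hf' : ∀ t ≥ 0, f' t ≤ -c * f t) :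
    ∀ t ≥ 0, f t ≤ exp (-(c * t)) * f 0 := by
  have hg : ∀ t ≥ 0, HasDerivAt (fun s => exp (c * s) * f s)
      (exp (c * t) * (c * f t + f' t)) t := by
    intro t ht
    have h := ((hasDerivAt_id t).const_mul c).exp.fun_mul (hf t ht)
    simp only [id, mul_one] at h
    exact h.congr_deriv (by ring)
  have hanti : AntitoneOn (fun s => exp (c * s) * f s) (Ici 0) := by
    refine antitoneOn_of_hasDerivWithinAt_nonpos (f' := fun t => exp (c * t) * (c * f t + f' t))
      (convex_Ici 0)
      (fun t ht => (hg t ht).continuousAt.continuousWithinAt) (fun t ht => ?_) (fun t ht => ?_)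
      <;> rw [interior_Ici] at ht
    · exact (hg t ht.le).hasDerivWithinAt
    · exact mul_nonpos_of_nonneg_of_nonpos (exp_pos _).le (by linarith [hf' t ht.le])
  intro t ht
  have h := hanti self_mem_Ici ht ht
  simp only [mul_zero, exp_zero, one_mul] at h
  rwa [exp_neg, ← div_eq_inv_mul, le_div_iff₀ (exp_pos _), mul_comm]

theorem abs_sub_le_exp_neg_mul_of_hasDerivAt {x k : ℝ → ℝ} {ξ c : ℝ}
    (hx : ∀ t ≥ 0, HasDerivAt x (-k t * (x t - ξ)) t) (hk : ∀ t ≥ 0, c ≤ k t) :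
    ∀ t ≥ 0, |x t - ξ| ≤ exp (-(c * t)) * |x 0 - ξ| := by
  have hsq : ∀ t ≥ 0, (x t - ξ) ^ 2 ≤ exp (-(2 * c * t)) * (x 0 - ξ) ^ 2 := by
    refine le_exp_neg_mul_of_hasDerivAt_le_neg_mul (fun t ht => ((hx t ht).sub_const ξ).pow 2)
      (fun t ht => ?_)
    have hkV := mul_le_mul_of_nonneg_right (hk t ht) (sq_nonneg (x t - ξ))
    simp only [Nat.cast_ofNat, pow_one, Nat.add_one_sub_one]
    linarith
  intro t ht
  have hexp : exp (-(2 * c * t)) = exp (-(c * t)) ^ 2 := by rw [← exp_nat_mul]; ring_nf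
  rw [← abs_of_nonneg (by positivity : 0 ≤ exp (-(c * t)) * |x 0 - ξ|), ← sq_le_sq, mul_pow,
    sq_abs, ← hexp]
  exact hsq t ht

theorem tendsto_of_abs_sub_le_exp_neg_mul {x : ℝ → ℝ} {ξ c C : ℝ} (hc : 0 < c)
    (hx : ∀ t ≥ 0, |x t - ξ| ≤ exp (-(c * t)) * C) : Tendsto x atTop (𝓝 ξ) := by
  have hdecay : Tendsto (fun t => exp (-(c * t)) * C) atTop (𝓝 0) := by
    simpa using (tendsto_exp_neg_atTop_nhds_zero.comp
      (tendsto_id.const_mul_atTop hc)).mul_const C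
  rw [tendsto_iff_norm_sub_tendsto_zero]
  exact squeeze_zero' (Eventually.of_forall fun t => norm_nonneg _)
    ((eventually_ge_atTop 0).mono hx) hdecay

theorem mul_div_one_add_mul_monotoneOn {a ε : ℝ} (ha : 0 ≤ a) (hε : 0 ≤ ε) :
    MonotoneOn (fun r => a * r / (1 + ε * r)) (Ici 0) := by
  intro r hr s hs hrs
  rw [mem_Ici] at hr hs
  rw [div_le_div_iff₀ (by positivity) (by positivity)]
  nlinarith [mul_le_mul_of_nonneg_left hrs ha]

section Model

variable {β γ μ N ε ξ : ℝ}

theorem vectorField_eq_neg_rate_mul_sub (hA : β + ε * (γ + μ) ≠ 0)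
    (hξ : ξ = (β * N - γ - μ) / (β + ε * (γ + μ))) {r : ℝ} (hr : 1 + ε * r ≠ 0) :
    β * r * (N - r) / (1 + ε * r) - (γ + μ) * r
      = -((β + ε * (γ + μ)) * r / (1 + ε * r)) * (r - ξ) := by
  subst hξ
  rw [div_sub' hr, neg_mul, ← mul_div_right_comm, ← neg_div]
  congr 1
  field_simp
  ring

theorem abs_sub_equilibrium_le_exp_neg_mul (hA : 0 < β + ε * (γ + μ)) (hε : 0 ≤ ε)
    (hξ : ξ = (β * N - γ - μ) / (β + ε * (γ + μ))) {R : ℝ → ℝ}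
    (hR : ∀ t ≥ (0:ℝ),
      HasDerivAt R (β * R t * (N - R t) / (1 + ε * R t) - (γ + μ) * R t) t)
    (hpos : ∀ t ≥ (0:ℝ), 0 < R t) {c : ℝ}
    (hc : ∀ t ≥ (0:ℝ), c ≤ (β + ε * (γ + μ)) * R t / (1 + ε * R t)) :
    ∀ t ≥ (0:ℝ), |R t - ξ| ≤ exp (-(c * t)) * |R 0 - ξ| := by
  refine abs_sub_le_exp_neg_mul_of_hasDerivAt (fun t ht => ?_) hc
  have hden : 1 + ε * R t ≠ 0 := by have := hpos t ht; positivity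
  rw [← vectorField_eq_neg_rate_mul_sub hA.ne' hξ hden]
  exact hR t ht

theorem abs_sub_equilibrium_le_initial (hA : 0 < β + ε * (γ + μ)) (hε : 0 ≤ ε)
    (hξ : ξ = (β * N - γ - μ) / (β + ε * (γ + μ))) {R : ℝ → ℝ}
    (hR : ∀ t ≥ (0:ℝ),
      HasDerivAt R (β * R t * (N - R t) / (1 + ε * R t) - (γ + μ) * R t) t)
    (hpos : ∀ t ≥ (0:ℝ), 0 < R t) :
    ∀ t ≥ (0:ℝ), |R t - ξ| ≤ |R 0 - ξ| := by
  intro t ht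
  have hrate : ∀ s ≥ (0:ℝ), 0 ≤ (β + ε * (γ + μ)) * R s / (1 + ε * R s) := fun s hs => by
    have := hpos s hs; positivity
  simpa using abs_sub_equilibrium_le_exp_neg_mul hA hε hξ hR hpos hrate t ht

end Model

theorem deterministic_asymptotic_stability_xi_general
    (β γ μ N ε : ℝ) (hβ : 0 < β) (hγ : 0 < γ) (hμ : 0 < μ) (hε : 0 < ε)
    (hK : β * N > γ + μ)
    (ξ : ℝ) (hξ : ξ = (β * N - γ - μ) / (β + ε * (γ + μ))) :
    (∀ ε' > (0:ℝ), ∃ δ > (0:ℝ), ∀ R : ℝ → ℝ,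
      (∀ t ≥ (0:ℝ),
        HasDerivAt R (β * R t * (N - R t) / (1 + ε * R t) - (γ + μ) * R t) t) →
      |R 0 - ξ| < δ →
      (∀ t ≥ (0:ℝ), R t ∈ Set.Ioo (0:ℝ) N) →
      ∀ t ≥ (0:ℝ), |R t - ξ| < ε') ∧
    (∃ δ > (0:ℝ), ∀ R : ℝ → ℝ,
      (∀ t ≥ (0:ℝ),
        HasDerivAt R (β * R t * (N - R t) / (1 + ε * R t) - (γ + μ) * R t) t) →
      |R 0 - ξ| < δ →
      (∀ t ≥ (0:ℝ), R t ∈ Set.Ioo (0:ℝ) N) →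
      Filter.Tendsto R Filter.atTop (nhds ξ)) := by
  have hA : 0 < β + ε * (γ + μ) := by positivity
  have hξpos : 0 < ξ := hξ ▸ div_pos (by linarith) hA
  refine ⟨fun ε' hε' => ⟨ε', hε', fun R hR h0 hRin t ht =>
    (abs_sub_equilibrium_le_initial hA hε.le hξ hR (fun s hs => (hRin s hs).1) t ht).trans_lt h0⟩,
    ⟨ξ / 2, half_pos hξpos, fun R hR h0 hRin => ?_⟩⟩
  have hpos : ∀ t ≥ (0:ℝ), 0 < R t := fun t ht => (hRin t ht).1
  have hlower : ∀ t ≥ (0:ℝ), ξ / 2 ≤ R t := fun t ht => by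
    have := abs_sub_lt_iff.1 ((abs_sub_equilibrium_le_initial hA hε.le hξ hR hpos t ht).trans_lt h0)
    linarith
  have hrate : ∀ t ≥ (0:ℝ), (β + ε * (γ + μ)) * (ξ / 2) / (1 + ε * (ξ / 2))
      ≤ (β + ε * (γ + μ)) * R t / (1 + ε * R t) := fun t ht =>
    mul_div_one_add_mul_monotoneOn hA.le hε.le (by simp only [mem_Ici]; positivity)
      (hpos t ht).le (hlower t ht)
  exact tendsto_of_abs_sub_le_exp_neg_mul (by positivity)
    (abs_sub_equilibrium_le_exp_neg_mul hA hε.le hξ hR hpos hrate)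

/-- Asymptotic stability of the nontrivial equilibrium
`ξ = (β N - γ - μ)/(β + ε (γ + μ))` of the deterministic model
`R' = β R (N - R)/(1 + ε R) - (γ + μ) R` when `β N > γ + μ`. -/
theorem deterministic_asymptotic_stability_xi
    (β γ μ N ε : ℝ) (hβ : 0 < β) (hγ : 0 < γ) (hμ : 0 < μ) (hN : 0 < N) (hε : 0 < ε)
    (hK : β * N > γ + μ)
    (ξ : ℝ) (hξ : ξ = (β * N - γ - μ) / (β + ε * (γ + μ))) :
    (∀ ε' > (0:ℝ), ∃ δ > (0:ℝ), ∀ R : ℝ → ℝ,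
      (∀ t ≥ (0:ℝ),
        HasDerivAt R (β * R t * (N - R t) / (1 + ε * R t) - (γ + μ) * R t) t) →
      |R 0 - ξ| < δ →
      (∀ t ≥ (0:ℝ), R t ∈ Set.Ioo (0:ℝ) N) →
      ∀ t ≥ (0:ℝ), |R t - ξ| < ε') ∧
    (∃ δ > (0:ℝ), ∀ R : ℝ → ℝ,
      (∀ t ≥ (0:ℝ),
        HasDerivAt R (β * R t * (N - R t) / (1 + ε * R t) - (γ + μ) * R t) t) →
      |R 0 - ξ| < δ →
      (∀ t ≥ (0:ℝ), R t ∈ Set.Ioo (0:ℝ) N) →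
      Filter.Tendsto R Filter.atTop (nhds ξ)) :=
  deterministic_asymptotic_stability_xi_general β γ μ N ε hβ hγ hμ hε hK ξ hξ
end

section
/- Extinction in the deterministic model: Assume βN < γ + μ. Then every differentiable R : ℝ → ℝ satisfying R'(t) = βR(t)(N − R(t))/(1 + εR(t)) − (γ+μ)R(t) for all t ≥ 0, with R(0) ∈ (0, N) and R(t) ∈ (0, N) for all t ≥ 0, satisfies lim_{t→∞} R(t) = 0. -/
/-!
Since `R ≥ 0` and `1 + εR ≥ 1`, the infection term satisfies `βR(N - R)/(1 + εR) ≤ βN R`, so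
`R' ≤ -c R` with `c = γ + μ - βN > 0`. Then `R(t) e^{ct}` is antitone, giving the exponential
decay `0 ≤ R(t) ≤ R(0) e^{-ct}`.
-/

open Real Filter Set Topology

theorem antitoneOn_mul_exp_of_deriv_le_neg_mul {f f' : ℝ → ℝ} {c : ℝ}
    (hf : ∀ t ≥ (0:ℝ), HasDerivAt f (f' t) t) (hle : ∀ t ≥ (0:ℝ), f' t ≤ -c * f t) :
    AntitoneOn (fun t => f t * exp (c * t)) (Ici 0) := by
  have hderiv : ∀ t ≥ (0:ℝ), HasDerivAt (fun t => f t * exp (c * t))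
      (f' t * exp (c * t) + f t * (exp (c * t) * c)) t := fun t ht =>
    (hf t ht).mul (((hasDerivAt_id t).const_mul c).exp.congr_deriv (by simp))
  refine antitoneOn_of_deriv_nonpos (convex_Ici 0)
    (fun t ht => (hderiv t ht).continuousAt.continuousWithinAt)
    (fun t ht => (hderiv t (interior_subset ht)).differentiableAt.differentiableWithinAt)
    fun t ht => ?_
  rw [(hderiv t (interior_subset ht)).deriv]
  have := mul_le_mul_of_nonneg_right (hle t (interior_subset ht)) (exp_pos (c * t)).le
  linarith

theorem le_mul_exp_neg_of_deriv_le_neg_mul {f f' : ℝ → ℝ} {c : ℝ}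
    (hf : ∀ t ≥ (0:ℝ), HasDerivAt f (f' t) t) (hle : ∀ t ≥ (0:ℝ), f' t ≤ -c * f t)
    {t : ℝ} (ht : 0 ≤ t) : f t ≤ f 0 * exp (-(c * t)) := by
  have hmono : f t * exp (c * t) ≤ f 0 * exp (c * 0) :=
    antitoneOn_mul_exp_of_deriv_le_neg_mul hf hle self_mem_Ici (mem_Ici.mpr ht) ht
  rw [mul_zero, exp_zero, mul_one] at hmono
  rw [exp_neg, ← div_eq_mul_inv, le_div_iff₀ (exp_pos _)]
  exact hmono

theorem tendsto_zero_of_nonneg_of_deriv_le_neg_mul {f f' : ℝ → ℝ} {c : ℝ} (hc : 0 < c)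
    (hf : ∀ t ≥ (0:ℝ), HasDerivAt f (f' t) t) (hle : ∀ t ≥ (0:ℝ), f' t ≤ -c * f t)
    (hnonneg : ∀ t ≥ (0:ℝ), 0 ≤ f t) : Tendsto f atTop (𝓝 0) := by
  have hdecay : Tendsto (fun t => f 0 * exp (-(c * t))) atTop (𝓝 0) := by
    simpa using (tendsto_exp_atBot.comp
      (tendsto_neg_atTop_atBot.comp (tendsto_id.const_mul_atTop hc))).const_mul (f 0)
  refine squeeze_zero' ?_ ?_ hdecay <;> filter_upwards [eventually_ge_atTop 0] with t ht
  · exact hnonneg t ht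
  · exact le_mul_exp_neg_of_deriv_le_neg_mul hf hle ht

theorem saturated_incidence_le {β N ε R : ℝ} (hβ : 0 ≤ β) (hN : 0 ≤ N) (hε : 0 ≤ ε)
    (hR : 0 ≤ R) : β * R * (N - R) / (1 + ε * R) ≤ β * N * R := by
  have hden : 1 ≤ 1 + ε * R := le_add_of_nonneg_right (mul_nonneg hε hR)
  rw [div_le_iff₀ (by linarith)]
  nlinarith [mul_nonneg (mul_nonneg hβ hR) hR,
    mul_nonneg (mul_nonneg hβ hN) (mul_nonneg hε (mul_nonneg hR hR))]

theorem deterministic_extinction_general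
    (β γ μ N ε : ℝ) (hβ : 0 < β) (hN : 0 < N) (hε : 0 < ε)
    (hK : β * N < γ + μ)
    (R : ℝ → ℝ)
    (hode : ∀ t ≥ (0:ℝ),
      HasDerivAt R (β * R t * (N - R t) / (1 + ε * R t) - (γ + μ) * R t) t)
    (hinv : ∀ t ≥ (0:ℝ), R t ∈ Set.Ioo (0:ℝ) N) :
    Filter.Tendsto R Filter.atTop (nhds 0) := by
  have hR : ∀ t ≥ (0:ℝ), 0 ≤ R t := fun t ht => (hinv t ht).1.le
  refine tendsto_zero_of_nonneg_of_deriv_le_neg_mul (sub_pos.mpr hK) hode (fun t ht => ?_) hR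
  have := saturated_incidence_le hβ.le hN.le hε.le (hR t ht)
  linarith

/-- Extinction in the deterministic model: if `β N < γ + μ`, every solution of
`R' = β R (N - R)/(1 + ε R) - (γ + μ) R` starting in `(0, N)` and remaining in
`(0, N)` tends to `0` as `t → ∞`. -/
theorem deterministic_extinction
    (β γ μ N ε : ℝ) (hβ : 0 < β) (hγ : 0 < γ) (hμ : 0 < μ) (hN : 0 < N) (hε : 0 < ε)
    (hK : β * N < γ + μ)
    (R : ℝ → ℝ)
    (hode : ∀ t ≥ (0:ℝ),
      HasDerivAt R (β * R t * (N - R t) / (1 + ε * R t) - (γ + μ) * R t) t)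
    (h0 : R 0 ∈ Set.Ioo (0:ℝ) N)
    (hinv : ∀ t ≥ (0:ℝ), R t ∈ Set.Ioo (0:ℝ) N) :
    Filter.Tendsto R Filter.atTop (nhds 0) :=
  deterministic_extinction_general β γ μ N ε hβ hN hε hK R hode hinv
end

section
/- Persistence in the deterministic model: Assume βN > γ + μ and set ξ = (βN − γ − μ)/(β + ε(γ+μ)). Then every differentiable R : ℝ → ℝ satisfying R'(t) = βR(t)(N − R(t))/(1 + εR(t)) − (γ+μ)R(t) for all t ≥ 0, with R(0) ∈ (0, N) and R(t) ∈ (0, N) for all t ≥ 0, satisfies lim_{t→∞} R(t) = ξ. -/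
/-!
With `c = β + ε (γ + μ) > 0` the right-hand side factors as `c R (ξ - R) / (1 + ε R)`, so
`(ξ - R) R' = c R / (1 + ε R) · (R - ξ)² ≥ 0` and `(R - ξ)²` is a Lyapunov function. Since
`|R - ξ|` never increases, `R` is eventually bounded below by some `m > 0`: either `R ≥ ξ`
throughout, or `R` never drops below its value at a time where it is below `ξ`. From then on
`(ξ - R) R' ≥ κ (R - ξ)²` with `κ = c m / (1 + ε N)`, so `e^{2κt} (R - ξ)²` is nonincreasing
and `R → ξ` exponentially fast.
-/

open Set Filter Topology Real

section Lyapunov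

variable {R r : ℝ → ℝ} {a ξ κ : ℝ}

theorem antitoneOn_exp_mul_sq_sub (hR : ∀ t ≥ a, HasDerivAt R (r t) t)
    (hdiss : ∀ t ≥ a, κ * (R t - ξ) ^ 2 ≤ (ξ - R t) * r t) :
    AntitoneOn (fun t => exp (2 * κ * t) * (R t - ξ) ^ 2) (Ici a) := by
  have hV : ∀ t ∈ Ici a, HasDerivAt (fun t => exp (2 * κ * t) * (R t - ξ) ^ 2)
      (2 * exp (2 * κ * t) * (κ * (R t - ξ) ^ 2 - (ξ - R t) * r t)) t := fun t ht => by
    have := (((hasDerivAt_id t).const_mul (2 * κ)).exp).mul (((hR t ht).sub_const ξ).pow 2)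
    refine this.congr_deriv ?_
    simp only [id, Pi.pow_apply, Nat.cast_ofNat]
    ring
  refine antitoneOn_of_hasDerivWithinAt_nonpos (convex_Ici a)
    (fun t ht => (hV t ht).continuousAt.continuousWithinAt)
    (fun t ht => (hV t (interior_subset ht)).hasDerivWithinAt) fun t ht => ?_
  have := hdiss t (interior_subset ht)
  have := exp_pos (2 * κ * t)
  nlinarith

theorem tendsto_of_antitoneOn_exp_mul_sq_sub (hκ : 0 < κ)
    (hV : AntitoneOn (fun t => exp (2 * κ * t) * (R t - ξ) ^ 2) (Ici a)) :
    Tendsto R atTop (𝓝 ξ) := by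
  set C := exp (2 * κ * a) * (R a - ξ) ^ 2
  have hbound : ∀ t ≥ a, (R t - ξ) ^ 2 ≤ C * exp (-(2 * κ * t)) := fun t ht => by
    rw [exp_neg, ← div_eq_mul_inv, le_div_iff₀ (exp_pos _), mul_comm]
    exact hV self_mem_Ici ht ht
  have hdecay : Tendsto (fun t => C * exp (-(2 * κ * t))) atTop (𝓝 0) := by
    simpa using (tendsto_exp_neg_atTop_nhds_zero.comp
      (tendsto_id.const_mul_atTop (by positivity : 0 < 2 * κ))).const_mul C
  have hsq : Tendsto (fun t => (R t - ξ) ^ 2) atTop (𝓝 0) :=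
    tendsto_of_tendsto_of_tendsto_of_le_of_le' tendsto_const_nhds hdecay
      (Eventually.of_forall fun t => sq_nonneg _) (eventually_ge_atTop a |>.mono hbound)
  rw [tendsto_iff_dist_tendsto_zero]
  simpa [Real.sqrt_sq_eq_abs, Real.dist_eq] using hsq.sqrt

theorem exists_pos_eventually_le_of_antitoneOn_sq_sub (hξ : 0 < ξ)
    (hpos : ∀ t ≥ a, 0 < R t) (hV : AntitoneOn (fun t => (R t - ξ) ^ 2) (Ici a)) :
    ∃ m > 0, ∀ᶠ t in atTop, m ≤ R t := by
  by_cases habove : ∀ t ≥ a, ξ ≤ R t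
  · exact ⟨ξ, hξ, eventually_atTop.2 ⟨a, habove⟩⟩
  push Not at habove
  obtain ⟨s, hs, hRs⟩ := habove
  refine ⟨R s, hpos s hs, eventually_atTop.2 ⟨s, fun t ht => ?_⟩⟩
  have : (R t - ξ) ^ 2 ≤ (R s - ξ) ^ 2 := hV hs (le_trans hs ht) ht
  nlinarith

end Lyapunov

theorem rate_eq_mul_sub_equilibrium {β γ μ N ε ξ x : ℝ}
    (hξ : ξ * (β + ε * (γ + μ)) = β * N - γ - μ) (hx : 1 + ε * x ≠ 0) :
    β * x * (N - x) / (1 + ε * x) - (γ + μ) * x =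
      (β + ε * (γ + μ)) * x * (ξ - x) / (1 + ε * x) := by
  rw [div_sub' hx, div_eq_div_iff hx hx]
  linear_combination (-x * (1 + ε * x)) * hξ

theorem deterministic_persistence_general
    (β γ μ N ε : ℝ) (hβ : 0 < β) (hγ : 0 < γ) (hμ : 0 < μ) (hN : 0 < N) (hε : 0 < ε)
    (hK : β * N > γ + μ)
    (ξ : ℝ) (hξ : ξ = (β * N - γ - μ) / (β + ε * (γ + μ)))
    (R : ℝ → ℝ)
    (hode : ∀ t ≥ (0:ℝ),
      HasDerivAt R (β * R t * (N - R t) / (1 + ε * R t) - (γ + μ) * R t) t)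
    (hinv : ∀ t ≥ (0:ℝ), R t ∈ Set.Ioo (0:ℝ) N) :
    Filter.Tendsto R Filter.atTop (nhds ξ) := by
  set c := β + ε * (γ + μ)
  have hc : 0 < c := by positivity
  have hξpos : 0 < ξ := hξ ▸ div_pos (by linarith) hc
  have hξc : ξ * c = β * N - γ - μ := by rw [hξ]; field_simp
  have hdiss : ∀ t ≥ (0:ℝ), (ξ - R t) * (β * R t * (N - R t) / (1 + ε * R t) - (γ + μ) * R t)
      = c * (R t / (1 + ε * R t)) * (R t - ξ) ^ 2 := fun t ht => by
    have hR := (hinv t ht).1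
    rw [rate_eq_mul_sub_equilibrium hξc (by positivity)]
    ring
  have hLyapunov : AntitoneOn (fun t => (R t - ξ) ^ 2) (Ici 0) := by
    simpa using antitoneOn_exp_mul_sq_sub (κ := 0) hode fun t ht => by
      have hR := (hinv t ht).1
      rw [zero_mul, hdiss t ht]
      positivity
  obtain ⟨m, hm, hmR⟩ := exists_pos_eventually_le_of_antitoneOn_sq_sub hξpos
    (fun t ht => (hinv t ht).1) hLyapunov
  obtain ⟨a, ha⟩ := (hmR.and (eventually_ge_atTop 0)).exists_forall_of_atTop
  refine tendsto_of_antitoneOn_exp_mul_sq_sub (κ := c * (m / (1 + ε * N))) (a := a)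
    (by positivity) (antitoneOn_exp_mul_sq_sub (fun t ht => hode t (ha t ht).2) fun t ht => ?_)
  obtain ⟨hmt, ht0⟩ := ha t ht
  obtain ⟨hRpos, hRN⟩ := hinv t ht0
  rw [hdiss t ht0]
  gcongr

/-- Persistence in the deterministic model: if `β N > γ + μ`, every solution of
`R' = β R (N - R)/(1 + ε R) - (γ + μ) R` starting in `(0, N)` and remaining in
`(0, N)` tends to `ξ = (β N - γ - μ)/(β + ε (γ + μ))` as `t → ∞`. -/
theorem deterministic_persistence
    (β γ μ N ε : ℝ) (hβ : 0 < β) (hγ : 0 < γ) (hμ : 0 < μ) (hN : 0 < N) (hε : 0 < ε)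
    (hK : β * N > γ + μ)
    (ξ : ℝ) (hξ : ξ = (β * N - γ - μ) / (β + ε * (γ + μ)))
    (R : ℝ → ℝ)
    (hode : ∀ t ≥ (0:ℝ),
      HasDerivAt R (β * R t * (N - R t) / (1 + ε * R t) - (γ + μ) * R t) t)
    (h0 : R 0 ∈ Set.Ioo (0:ℝ) N)
    (hinv : ∀ t ≥ (0:ℝ), R t ∈ Set.Ioo (0:ℝ) N) :
    Filter.Tendsto R Filter.atTop (nhds ξ) :=
  deterministic_persistence_general β γ μ N ε hβ hγ hμ hN hε hK ξ hξ R hode hinv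
end

section
/- Lyapunov growth bound for the invariance proof: Let V : (0, N) → ℝ be defined by V(R) = 1/R + 1/(N − R), and let c = max(γ+μ, βN). Then for every R ∈ (0, N), (βR(N − R)/(1 + εR) − (γ+μ)R)·(−1/R² + 1/(N − R)²) ≤ c·V(R). -/
/-! Expanding the product, `b(R) V'(R)` splits into an infection part
`β/(1+εR) · (R/(N-R) - (N-R)/R)` and a removal part `(γ+μ)(1/R - R/(N-R)²)`.
Dropping the negative summand of each and using `1 + εR ≥ 1`, `R ≤ N` leaves
`βN/(N-R) + (γ+μ)/R`, which is at most `c · V(R)`. -/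

lemma drift_mul_barrier_deriv_eq {β g ε R N : ℝ} (hR : R ≠ 0) (hNR : N - R ≠ 0) :
    (β * R * (N - R) / (1 + ε * R) - g * R) * (-(1 / R ^ 2) + 1 / (N - R) ^ 2)
      = β / (1 + ε * R) * (R / (N - R) - (N - R) / R) + g * (1 / R - R / (N - R) ^ 2) := by
  field_simp
  ring

lemma infection_term_le {β D R a : ℝ} (hβ : 0 ≤ β) (hD : 1 ≤ D) (hR : 0 < R) (ha : 0 < a) :
    β / D * (R / a - a / R) ≤ β * R / a := by
  calc β / D * (R / a - a / R) ≤ β / D * (R / a) := by gcongr; exact sub_le_self _ (by positivity)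
    _ ≤ β * (R / a) := by gcongr; exact div_le_self hβ hD
    _ = β * R / a := by ring

lemma removal_term_le {g R a : ℝ} (hg : 0 ≤ g) (hR : 0 < R) :
    g * (1 / R - R / a ^ 2) ≤ g / R := by
  calc g * (1 / R - R / a ^ 2) ≤ g * (1 / R) := by gcongr; exact sub_le_self _ (by positivity)
    _ = g / R := mul_one_div g R

theorem lyapunov_growth_bound_general
    (β γ μ N ε : ℝ) (hβ : 0 < β) (hγ : 0 < γ) (hμ : 0 < μ) (hε : 0 < ε)
    (c : ℝ) (hc : c = max (γ + μ) (β * N)) :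
    ∀ R ∈ Set.Ioo (0:ℝ) N,
      (β * R * (N - R) / (1 + ε * R) - (γ + μ) * R)
          * (-(1 / R ^ 2) + 1 / (N - R) ^ 2)
        ≤ c * (1 / R + 1 / (N - R)) := by
  rintro R ⟨hR, hRN⟩
  have hNR : 0 < N - R := sub_pos.mpr hRN
  have hD : 1 ≤ 1 + ε * R := le_add_of_nonneg_right (by positivity)
  rw [drift_mul_barrier_deriv_eq hR.ne' hNR.ne']
  have hinf : β / (1 + ε * R) * (R / (N - R) - (N - R) / R) ≤ c / (N - R) :=
    calc _ ≤ β * R / (N - R) := infection_term_le hβ.le hD hR hNR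
      _ ≤ β * N / (N - R) := by gcongr
      _ ≤ c / (N - R) := by gcongr; exact hc ▸ le_max_right _ _
  have hrem : (γ + μ) * (1 / R - R / (N - R) ^ 2) ≤ c / R :=
    calc _ ≤ (γ + μ) / R := removal_term_le (by positivity) hR
      _ ≤ c / R := by gcongr; exact hc ▸ le_max_left _ _
  calc _ ≤ c / (N - R) + c / R := add_le_add hinf hrem
    _ = c * (1 / R + 1 / (N - R)) := by ring

/-- Lyapunov growth bound for the invariance proof: with
`V(R) = 1/R + 1/(N - R)` and `c = max (γ + μ) (β N)`, we have
`b(R) · V'(R) ≤ c · V(R)` for every `R ∈ (0, N)`. -/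
theorem lyapunov_growth_bound
    (β γ μ N ε : ℝ) (hβ : 0 < β) (hγ : 0 < γ) (hμ : 0 < μ) (hN : 0 < N) (hε : 0 < ε)
    (c : ℝ) (hc : c = max (γ + μ) (β * N)) :
    ∀ R ∈ Set.Ioo (0:ℝ) N,
      (β * R * (N - R) / (1 + ε * R) - (γ + μ) * R)
          * (-(1 / R ^ 2) + 1 / (N - R) ^ 2)
        ≤ c * (1 / R + 1 / (N - R)) :=
  lyapunov_growth_bound_general β γ μ N ε hβ hγ hμ hε c hc
end

section
/- Properties of the logarithmic Lyapunov function: Assume βN > γ + μ, set ξ = (βN − γ − μ)/(β + ε(γ+μ)) and c = ξ/(N − ξ), and define V : (0, N) → ℝ by V(R) = c·(N/R − 1) − 1 − ln(c·(N/R − 1)). Then: (i) V(R) ≥ 0 for all R ∈ (0, N), with V(R) = 0 if and only if R = ξ; (ii) for every R ∈ (0, N) with R ≠ ξ, (βR(N − R)/(1 + εR) − (γ+μ)R)·V'(R) < 0; and (iii) V(R) → ∞ as R → 0⁺ and as R → N⁻. -/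
/-!
Substituting `u = c (N/R - 1)` writes `V` as `φ ∘ u` with `φ x = x - 1 - log x`. The map `u` sends
`(0, N)` into `(0, ∞)`, takes the value `1` exactly at `ξ`, and tends to `∞` at `0⁺` and to `0⁺` at
`N⁻`; since `φ ≥ 0` on `(0, ∞)` with equality only at `1` and `φ` blows up at `0⁺` and at `∞`, this
gives (i) and (iii). For (ii), both the drift `b R` and `φ' (u R) = 1 - (u R)⁻¹` equal `ξ - R`
times a positive factor, while `u' < 0`, so `b · V' = -(ξ - R)² · (positive)`.
-/

open Real Filter Set Topology

noncomputable def volterra (x : ℝ) : ℝ := x - 1 - log x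

lemma volterra_nonneg {x : ℝ} (hx : 0 < x) : 0 ≤ volterra x := by
  unfold volterra
  linarith [log_le_sub_one_of_pos hx]

lemma volterra_eq_zero_iff {x : ℝ} (hx : 0 < x) : volterra x = 0 ↔ x = 1 := by
  refine ⟨fun h => by_contra fun hx1 => ?_, fun h => by simp [volterra, h]⟩
  unfold volterra at h
  linarith [log_lt_sub_one_of_pos hx hx1]

lemma hasDerivAt_volterra {x : ℝ} (hx : x ≠ 0) : HasDerivAt volterra (1 - x⁻¹) x :=
  ((hasDerivAt_id x).sub_const 1).sub (hasDerivAt_log hx)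

-- `log (x / 2) ≤ x / 2 - 1` and `log 2 < 1`
lemma half_sub_one_le_volterra {x : ℝ} (hx : 0 < x) : x / 2 - 1 ≤ volterra x := by
  have hhalf := log_le_sub_one_of_pos (half_pos hx)
  rw [log_div hx.ne' two_ne_zero] at hhalf
  unfold volterra
  linarith [log_two_lt_d9]

lemma tendsto_volterra_atTop : Tendsto volterra atTop atTop := by
  refine tendsto_atTop_mono' atTop ?_
    (tendsto_atTop_add_const_right _ (-1) (tendsto_id.atTop_div_const two_pos))
  filter_upwards [eventually_gt_atTop 0] with x hx
  exact half_sub_one_le_volterra hx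

lemma tendsto_volterra_nhdsGT_zero : Tendsto volterra (𝓝[>] 0) atTop := by
  have hlin : Tendsto (fun x : ℝ => x - 1) (𝓝[>] 0) (𝓝 (0 - 1)) :=
    (tendsto_id.mono_left nhdsWithin_le_nhds).sub_const 1
  refine (hlin.add_atTop (tendsto_neg_atBot_atTop.comp tendsto_log_nhdsGT_zero)).congr fun x => ?_
  simp only [volterra, Function.comp_apply]
  ring

noncomputable def scaledOdds (c N R : ℝ) : ℝ := c * (N / R - 1)

section ScaledOdds

variable {c N R : ℝ}

lemma scaledOdds_pos (hc : 0 < c) (hR : R ∈ Ioo 0 N) : 0 < scaledOdds c N R := by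
  have : 1 < N / R := (one_lt_div hR.1).mpr hR.2
  unfold scaledOdds
  nlinarith

lemma hasDerivAt_scaledOdds (hR : R ≠ 0) :
    HasDerivAt (scaledOdds c N) (-(c * N / R ^ 2)) R := by
  have h := (((hasDerivAt_inv hR).const_mul N).sub_const 1).const_mul c
  simp only [← div_eq_mul_inv] at h
  exact h.congr_deriv (by ring)

lemma scaledOdds_sub_one {ξ : ℝ} (hc : c = ξ / (N - ξ)) (hξN : ξ ≠ N) (hR : R ≠ 0) :
    scaledOdds c N R - 1 = (ξ - R) * (N / ((N - ξ) * R)) := by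
  have : N - ξ ≠ 0 := sub_ne_zero.mpr hξN.symm
  rw [scaledOdds, hc]
  field_simp
  ring

lemma scaledOdds_eq_one_iff {ξ : ℝ} (hc : c = ξ / (N - ξ)) (hξN : ξ < N) (hR : R ∈ Ioo 0 N) :
    scaledOdds c N R = 1 ↔ R = ξ := by
  have hq : N / ((N - ξ) * R) ≠ 0 :=
    (div_pos (hR.1.trans hR.2) (mul_pos (sub_pos.mpr hξN) hR.1)).ne'
  rw [← sub_eq_zero, scaledOdds_sub_one hc hξN.ne hR.1.ne', mul_eq_zero, sub_eq_zero, eq_comm,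
    or_iff_left hq]

lemma tendsto_scaledOdds_nhdsGT_zero (hc : 0 < c) (hN : 0 < N) :
    Tendsto (scaledOdds c N) (𝓝[>] 0) atTop := by
  have hdiv : Tendsto (fun R : ℝ => N / R) (𝓝[>] 0) atTop := by
    simpa only [div_eq_mul_inv] using tendsto_inv_nhdsGT_zero.const_mul_atTop hN
  exact (tendsto_atTop_add_const_right _ (-1) hdiv).const_mul_atTop hc

lemma tendsto_scaledOdds_nhdsLT (hc : 0 < c) (hN : 0 < N) :
    Tendsto (scaledOdds c N) (𝓝[<] N) (𝓝[>] 0) := by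
  refine tendsto_nhdsWithin_iff.mpr ⟨?_, ?_⟩
  · have hcont : ContinuousAt (scaledOdds c N) N :=
      continuousAt_const.mul ((continuousAt_const.div continuousAt_id hN.ne').sub continuousAt_const)
    simpa [scaledOdds, div_self hN.ne'] using hcont.tendsto.mono_left nhdsWithin_le_nhds
  · filter_upwards [Ioo_mem_nhdsLT hN] with R hR
    exact scaledOdds_pos hc hR

end ScaledOdds

lemma equilibrium_mem_Ioo {β γ μ N ε : ℝ} (hD : 0 < β + ε * (γ + μ)) (hγμ : 0 < γ + μ)
    (hN : 0 < N) (hε : 0 ≤ ε) (hK : γ + μ < β * N) :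
    (β * N - γ - μ) / (β + ε * (γ + μ)) ∈ Ioo 0 N := by
  refine ⟨div_pos (by linarith) hD, (div_lt_iff₀ hD).mpr ?_⟩
  nlinarith [mul_nonneg hN.le (mul_nonneg hε hγμ.le)]

lemma drift_eq {β γ μ N ε ξ R : ℝ} (hD : β + ε * (γ + μ) ≠ 0)
    (hξ : ξ = (β * N - γ - μ) / (β + ε * (γ + μ))) (hR : 1 + ε * R ≠ 0) :
    β * R * (N - R) / (1 + ε * R) - (γ + μ) * R
      = (ξ - R) * ((β + ε * (γ + μ)) * R / (1 + ε * R)) := by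
  rw [hξ, eq_comm, ← sub_eq_zero]
  field_simp
  ring

lemma drift_mul_deriv_volterra_scaledOdds_neg {β γ μ N ε ξ c R : ℝ}
    (hD : 0 < β + ε * (γ + μ)) (hε : 0 ≤ ε) (hξ : ξ = (β * N - γ - μ) / (β + ε * (γ + μ)))
    (hξN : ξ < N) (hc : c = ξ / (N - ξ)) (hc0 : 0 < c) (hR : R ∈ Ioo 0 N) (hRξ : R ≠ ξ) :
    (β * R * (N - R) / (1 + ε * R) - (γ + μ) * R) * deriv (volterra ∘ scaledOdds c N) R < 0 := by
  obtain ⟨hR0, hRN⟩ := hR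
  set u := scaledOdds c N R
  have hu : 0 < u := scaledOdds_pos hc0 ⟨hR0, hRN⟩
  have hNξ : 0 < N - ξ := sub_pos.mpr hξN
  have hφ' : 1 - u⁻¹ = (ξ - R) * (N / ((N - ξ) * R) / u) := by
    rw [mul_div_assoc', ← scaledOdds_sub_one hc hξN.ne hR0.ne', sub_div, div_self hu.ne', one_div]
  have hpos :
      0 < (β + ε * (γ + μ)) * R / (1 + ε * R) * (N / ((N - ξ) * R) / u) * (c * N / R ^ 2) := by
    have hN : 0 < N := hR0.trans hRN
    positivity
  rw [((hasDerivAt_volterra hu.ne').comp R (hasDerivAt_scaledOdds hR0.ne')).deriv,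
    drift_eq hD.ne' hξ (by positivity), hφ']
  calc _ = -((ξ - R) ^ 2 *
        ((β + ε * (γ + μ)) * R / (1 + ε * R) * (N / ((N - ξ) * R) / u) * (c * N / R ^ 2))) := by
        ring
    _ < 0 := neg_neg_of_pos (mul_pos (sq_pos_of_ne_zero (sub_ne_zero.mpr hRξ.symm)) hpos)

theorem log_lyapunov_properties_general
    (β γ μ N ε : ℝ) (hγ : 0 < γ) (hμ : 0 < μ) (hN : 0 < N) (hε : 0 < ε)
    (hK : β * N > γ + μ)
    (ξ : ℝ) (hξ : ξ = (β * N - γ - μ) / (β + ε * (γ + μ)))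
    (c : ℝ) (hc : c = ξ / (N - ξ))
    (V : ℝ → ℝ)
    (hV : ∀ R, V R = c * (N / R - 1) - 1 - Real.log (c * (N / R - 1))) :
    (∀ R ∈ Set.Ioo (0:ℝ) N, 0 ≤ V R ∧ (V R = 0 ↔ R = ξ)) ∧
    (∀ R ∈ Set.Ioo (0:ℝ) N, R ≠ ξ →
      (β * R * (N - R) / (1 + ε * R) - (γ + μ) * R) * deriv V R < 0) ∧
    Filter.Tendsto V (nhdsWithin 0 (Set.Ioi 0)) Filter.atTop ∧
    Filter.Tendsto V (nhdsWithin N (Set.Iio N)) Filter.atTop := by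
  have hγμ : 0 < γ + μ := add_pos hγ hμ
  have hβ : 0 < β := pos_of_mul_pos_left (hγμ.trans hK) hN.le
  have hD : 0 < β + ε * (γ + μ) := by positivity
  obtain ⟨hξ0, hξN⟩ : ξ ∈ Ioo 0 N := hξ ▸ equilibrium_mem_Ioo hD hγμ hN hε.le hK
  have hc0 : 0 < c := hc ▸ div_pos hξ0 (sub_pos.mpr hξN)
  obtain rfl : V = volterra ∘ scaledOdds c N := funext hV
  refine ⟨fun R hR => ⟨volterra_nonneg (scaledOdds_pos hc0 hR), ?_⟩, fun R hR hRξ => ?_,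
    tendsto_volterra_atTop.comp (tendsto_scaledOdds_nhdsGT_zero hc0 hN),
    tendsto_volterra_nhdsGT_zero.comp (tendsto_scaledOdds_nhdsLT hc0 hN)⟩
  · rw [Function.comp_apply, volterra_eq_zero_iff (scaledOdds_pos hc0 hR),
      scaledOdds_eq_one_iff hc hξN hR]
  · exact drift_mul_deriv_volterra_scaledOdds_neg hD hε.le hξ hξN hc hc0 hR hRξ

/-- Properties of the logarithmic Lyapunov function
`V(R) = c (N/R - 1) - 1 - ln (c (N/R - 1))` with `c = ξ/(N - ξ)`,
where `ξ = (β N - γ - μ)/(β + ε (γ + μ))` and `β N > γ + μ`: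
(i) `V ≥ 0` on `(0, N)` vanishing exactly at `ξ`;
(ii) `b(R) · V'(R) < 0` on `(0, N) \ {ξ}`;
(iii) `V(R) → ∞` as `R → 0⁺` and as `R → N⁻`. -/
theorem log_lyapunov_properties
    (β γ μ N ε : ℝ) (hβ : 0 < β) (hγ : 0 < γ) (hμ : 0 < μ) (hN : 0 < N) (hε : 0 < ε)
    (hK : β * N > γ + μ)
    (ξ : ℝ) (hξ : ξ = (β * N - γ - μ) / (β + ε * (γ + μ)))
    (c : ℝ) (hc : c = ξ / (N - ξ))
    (V : ℝ → ℝ)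
    (hV : ∀ R, V R = c * (N / R - 1) - 1 - Real.log (c * (N / R - 1))) :
    (∀ R ∈ Set.Ioo (0:ℝ) N, 0 ≤ V R ∧ (V R = 0 ↔ R = ξ)) ∧
    (∀ R ∈ Set.Ioo (0:ℝ) N, R ≠ ξ →
      (β * R * (N - R) / (1 + ε * R) - (γ + μ) * R) * deriv V R < 0) ∧
    Filter.Tendsto V (nhdsWithin 0 (Set.Ioi 0)) Filter.atTop ∧
    Filter.Tendsto V (nhdsWithin N (Set.Iio N)) Filter.atTop :=
  log_lyapunov_properties_general β γ μ N ε hγ hμ hN hε hK ξ hξ c hc V hV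
end
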